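/- arXiv:0909.0537 — 5 statements merged into one kernel-verified Lean document; each statement's English description precedes it below -/
import Mathlib

section
/- Let S = (X, R) and T = (X, R') be set systems (range spaces) of VC dimension δ and δ' respectively, with δ, δ' > 1. Define the intersection system Ŝ = (X, R̂) where R̂ = { r ∩ r' : r ∈ R, r' ∈ R' }. Then the VC dimension of Ŝ is O(δ + δ'); concretely, it is at most c(δ + δ') for some absolute constant c. -/
/-- A finite set `A` is shattered by a family of ranges `R`. -/
def ShattersSys {X : Type*} (R : Set (Set X)) (A : Finset X) : Prop :=
  ∀ B ⊆ A, ∃ r ∈ R, (B : Set X) = r ∩ (A : Set X)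

/-- The VC dimension of the set system `(X, R)` is at most `n`. -/
def VCDimLE {X : Type*} (R : Set (Set X)) (n : ℕ) : Prop :=
  ∀ A : Finset X, ShattersSys R A → A.card ≤ n

/-!
If a set `A` of size `n` is shattered by the pairwise intersections, every subset of `A` is the
trace `(r ∩ r') ∩ A` of one, so `2 ^ n` is at most the number of traces of `R` on `A` times the
number of traces of `R'` on `A`, hence at most `Φ_δ(n) Φ_δ'(n)` by Sauer–Shelah, where
`Φ_d(n) = ∑_{k ≤ d} (n choose k)`. Weighting the binomial sum gives `4 ^ n Φ_d(n) ≤ 4 ^ d 5 ^ n`,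
so `32 ^ n ≤ 4 ^ (δ + δ') 25 ^ n`, which fails for `n > 6 (δ + δ')` because `4 * 25 ^ 6 < 32 ^ 6`.
-/

open Finset

theorem pow_mul_sum_choose_le {a : ℕ} (ha : 1 ≤ a) (n d : ℕ) :
    a ^ n * ∑ k ∈ Iic d, n.choose k ≤ a ^ d * (a + 1) ^ n := by
  rw [add_comm a 1, add_pow, mul_sum, mul_sum]
  calc ∑ k ∈ Iic d, a ^ n * n.choose k
      ≤ ∑ k ∈ Iic d, a ^ d * (1 ^ k * a ^ (n - k) * n.choose k) := by
        refine sum_le_sum fun k hk => ?_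
        rcases le_or_gt k n with hkn | hkn
        · calc a ^ n * n.choose k = a ^ k * a ^ (n - k) * n.choose k := by
                rw [← pow_add, Nat.add_sub_cancel' hkn]
            _ ≤ a ^ d * a ^ (n - k) * n.choose k := by
                gcongr
                exact mem_Iic.1 hk
            _ = _ := by ring
        · simp [Nat.choose_eq_zero_of_lt hkn]
    _ ≤ ∑ k ∈ range (n + 1), a ^ d * (1 ^ k * a ^ (n - k) * n.choose k) := by
        refine sum_le_sum_of_ne_zero fun k _ hk => mem_range.2 ?_
        by_contra! hkn
        simp [Nat.choose_eq_zero_of_lt (Nat.lt_of_succ_le hkn)] at hk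

theorem four_pow_mul_twentyfive_pow_lt {D n : ℕ} (h : 6 * D < n) : 4 ^ D * 25 ^ n < 32 ^ n := by
  obtain ⟨m, rfl⟩ := Nat.exists_eq_add_of_lt h
  calc 4 ^ D * 25 ^ (6 * D + m + 1) = (4 * 25 ^ 6) ^ D * 25 ^ (m + 1) := by
        rw [mul_pow, ← pow_mul]; ring
    _ ≤ (32 ^ 6) ^ D * 25 ^ (m + 1) := by gcongr; norm_num
    _ < (32 ^ 6) ^ D * 32 ^ (m + 1) := by gcongr; norm_num
    _ = 32 ^ (6 * D + m + 1) := by rw [← pow_mul]; ring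

theorem sum_choose_mul_sum_choose_lt {δ δ' n : ℕ} (h : 6 * (δ + δ') < n) :
    (∑ k ∈ Iic δ, n.choose k) * (∑ k ∈ Iic δ', n.choose k) < 2 ^ n := by
  refine Nat.lt_of_mul_lt_mul_left (a := 16 ^ n) ?_
  calc 16 ^ n * ((∑ k ∈ Iic δ, n.choose k) * (∑ k ∈ Iic δ', n.choose k))
      = (4 ^ n * ∑ k ∈ Iic δ, n.choose k) * (4 ^ n * ∑ k ∈ Iic δ', n.choose k) := by
        rw [show 16 = 4 * 4 from rfl, mul_pow]; ring
    _ ≤ (4 ^ δ * 5 ^ n) * (4 ^ δ' * 5 ^ n) :=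
        Nat.mul_le_mul (pow_mul_sum_choose_le (by norm_num) n δ)
          (pow_mul_sum_choose_le (by norm_num) n δ')
    _ = 4 ^ (δ + δ') * 25 ^ n := by rw [show 25 = 5 * 5 from rfl, mul_pow, pow_add]; ring
    _ < 32 ^ n := four_pow_mul_twentyfive_pow_lt h
    _ = 16 ^ n * 2 ^ n := by rw [show 32 = 16 * 2 from rfl, mul_pow]

variable {X : Type*}

open Classical in
/-- The traces `r ∩ A`, `r ∈ R`, as subsets of the subtype `A`, so that `Finset.vcDim` applies. -/
noncomputable def traces (R : Set (Set X)) (A : Finset X) : Finset (Finset A) :=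
  {u | ∃ r ∈ R, ∀ a : A, a ∈ u ↔ (a : X) ∈ r}

theorem mem_traces {R : Set (Set X)} {A : Finset X} {u : Finset A} :
    u ∈ traces R A ↔ ∃ r ∈ R, ∀ a : A, a ∈ u ↔ (a : X) ∈ r := by
  simp [traces]

theorem ShattersSys.traces_eq_univ {R : Set (Set X)} {A : Finset X} (hA : ShattersSys R A) :
    traces R A = univ := by
  refine eq_univ_of_forall fun u => mem_traces.2 ?_
  obtain ⟨r, hr, hur⟩ := hA (u.map (.subtype _)) fun x hx => by
    obtain ⟨a, -, rfl⟩ := mem_map.1 hx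
    exact a.2
  refine ⟨r, hr, fun a => ?_⟩
  have := congrArg ((a : X) ∈ ·) hur
  simpa [a.2] using this

theorem ShattersSys.of_shatters_traces [DecidableEq X] {R : Set (Set X)} {A : Finset X}
    {s : Finset A} (hs : (traces R A).Shatters s) : ShattersSys R (s.map (.subtype _)) := by
  intro B hB
  obtain ⟨u, hu, hsu⟩ := hs (filter_subset (fun a : A => (a : X) ∈ B) s)
  obtain ⟨r, hr, hur⟩ := mem_traces.1 hu
  refine ⟨r, hr, Set.ext fun x => ⟨fun hx => ⟨?_, hB hx⟩, ?_⟩⟩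
  · obtain ⟨a, ha, rfl⟩ := mem_map.1 (hB hx)
    have : a ∈ s ∩ u := hsu ▸ mem_filter.2 ⟨ha, hx⟩
    exact (hur a).1 (mem_inter.1 this).2
  · rintro ⟨hxr, hxs⟩
    obtain ⟨a, ha, rfl⟩ := mem_map.1 hxs
    have : a ∈ filter (fun a : A => (a : X) ∈ B) s := hsu ▸ mem_inter.2 ⟨ha, (hur a).2 hxr⟩
    exact (mem_filter.1 this).2

theorem VCDimLE.vcDim_traces_le [DecidableEq X] {R : Set (Set X)} {δ : ℕ} (hR : VCDimLE R δ)
    (A : Finset X) :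
    (traces R A).vcDim ≤ δ :=
  Finset.sup_le fun s hs => by
    simpa using hR _ (ShattersSys.of_shatters_traces (mem_shatterer.1 hs))

theorem VCDimLE.card_traces_le {R : Set (Set X)} {δ : ℕ} (hR : VCDimLE R δ) (A : Finset X) :
    #(traces R A) ≤ ∑ k ∈ Iic δ, (#A).choose k := by
  classical
  calc #(traces R A) ≤ #(traces R A).shatterer := card_le_card_shatterer _
    _ ≤ ∑ k ∈ Iic (traces R A).vcDim, (Fintype.card A).choose k := card_shatterer_le_sum_vcDim
    _ ≤ ∑ k ∈ Iic δ, (#A).choose k := by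
        rw [Fintype.card_coe]
        exact sum_le_sum_of_subset (Iic_subset_Iic.2 (hR.vcDim_traces_le A))

theorem card_traces_inter_le (R R' : Set (Set X)) (A : Finset X) :
    #(traces {s : Set X | ∃ r ∈ R, ∃ r' ∈ R', s = r ∩ r'} A) ≤
      #(traces R A) * #(traces R' A) := by
  classical
  refine (card_le_card fun u hu => ?_).trans (card_image₂_le (· ∩ ·) _ _)
  obtain ⟨_, ⟨r, hr, r', hr', rfl⟩, hu⟩ := mem_traces.1 hu
  refine mem_image₂.2 ⟨({a | (a : X) ∈ r} : Finset A), mem_traces.2 ⟨r, hr, by simp⟩,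
    ({a | (a : X) ∈ r'} : Finset A), mem_traces.2 ⟨r', hr', by simp⟩, ?_⟩
  ext a
  simp [hu a]

/-- There is an absolute constant `c` such that for any two set systems on
a common ground set of VC dimensions `δ, δ' > 1`, the system of pairwise intersections
of their ranges has VC dimension at most `c * (δ + δ')`. -/
theorem vcDim_intersection_system :
    ∃ c : ℕ, 0 < c ∧
      ∀ (X : Type) (R R' : Set (Set X)) (δ δ' : ℕ),
        1 < δ → 1 < δ' → VCDimLE R δ → VCDimLE R' δ' →
        VCDimLE {s : Set X | ∃ r ∈ R, ∃ r' ∈ R', s = r ∩ r'} (c * (δ + δ')) := by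
  refine ⟨6, by norm_num, fun X R R' δ δ' _ _ hR hR' A hA => ?_⟩
  classical
  by_contra! hlarge
  have htraces : 2 ^ #A ≤ #(traces R A) * #(traces R' A) := by
    simpa [hA.traces_eq_univ] using card_traces_inter_le R R' A
  have hsauer := htraces.trans (Nat.mul_le_mul (hR.card_traces_le A) (hR'.card_traces_le A))
  exact hsauer.not_gt (sum_choose_mul_sum_choose_lt hlarge)
end

section
/- Let Y = ∑_{i=1}^k X_i be a sum of independent Bernoulli random variables X_i with P(X_i = 1) = p_i, and suppose μ = E[Y] ≥ c·d for constants c ≥ 4 and positive integer d. Then for every integer j with 0 ≤ j ≤ d, P(Y ≤ d − j) ≤ exp(−(c/4)·d − (3/4)·j). -/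
/-!
Chernoff's method at the fixed parameter `t = -1`. By convexity, `exp (t x) ≤ 1 + (eᵗ - 1) x` on
`[0, 1]`, so every `[0, 1]`-valued variable has `E[exp (t X)] ≤ exp ((eᵗ - 1) E[X])`, and by
independence the same holds for a sum `Y`. Markov's inequality for `exp (-Y)` then gives
`P(Y ≤ a) ≤ exp (a - (1 - e⁻¹) E[Y]) ≤ exp (a - E[Y] / 2)`, and with `a = d - j`,
`E[Y] ≥ c d` and `c ≥ 4` the exponent is at most `-(c/4) d - (3/4) j`.
-/

open MeasureTheory ProbabilityTheory Real

lemma exp_mul_le_one_add_mul {x : ℝ} (hx : x ∈ Set.Icc (0 : ℝ) 1) (t : ℝ) :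
    exp (t * x) ≤ 1 + (exp t - 1) * x := by
  have h := convexOn_exp.2 (Set.mem_univ 0) (Set.mem_univ t) (sub_nonneg.2 hx.2) hx.1
    (sub_add_cancel 1 x)
  simp only [smul_eq_mul, mul_zero, zero_add, exp_zero, mul_one, mul_comm x t] at h
  linarith

namespace ProbabilityTheory

variable {Ω : Type*} [MeasurableSpace Ω] {μ : Measure Ω} [IsProbabilityMeasure μ]

lemma mgf_le_exp_of_mem_unitInterval {X : Ω → ℝ} (hX : AEMeasurable X μ)
    (h01 : ∀ᵐ ω ∂μ, X ω ∈ Set.Icc (0 : ℝ) 1) (t : ℝ) :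
    mgf X μ t ≤ exp ((exp t - 1) * μ[X]) := by
  have hint := Integrable.of_mem_Icc 0 1 hX h01
  calc mgf X μ t ≤ ∫ ω, 1 + (exp t - 1) * X ω ∂μ :=
        integral_mono_of_nonneg (.of_forall fun _ => (exp_pos _).le)
          ((integrable_const 1).add (hint.const_mul _))
          (h01.mono fun _ hx => exp_mul_le_one_add_mul hx t)
    _ = 1 + (exp t - 1) * μ[X] := by
        rw [integral_add (integrable_const 1) (hint.const_mul _), integral_const_mul]
        simp
    _ ≤ exp ((exp t - 1) * μ[X]) := by linarith [add_one_le_exp ((exp t - 1) * μ[X])]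

variable {ι : Type*} {X : ι → Ω → ℝ}

lemma iIndepFun.mgf_sum_le_exp_of_mem_unitInterval (hind : iIndepFun X μ)
    (hmeas : ∀ i, Measurable (X i)) (h01 : ∀ i, ∀ᵐ ω ∂μ, X i ω ∈ Set.Icc (0 : ℝ) 1)
    (s : Finset ι) (t : ℝ) :
    mgf (fun ω => ∑ i ∈ s, X i ω) μ t ≤ exp ((exp t - 1) * ∫ ω, ∑ i ∈ s, X i ω ∂μ) := by
  calc mgf (fun ω => ∑ i ∈ s, X i ω) μ t = ∏ i ∈ s, mgf (X i) μ t := by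
        simpa only [← Finset.sum_apply] using hind.mgf_sum hmeas s
    _ ≤ ∏ i ∈ s, exp ((exp t - 1) * μ[X i]) :=
        Finset.prod_le_prod (fun _ _ => mgf_nonneg)
          fun i _ => mgf_le_exp_of_mem_unitInterval (hmeas i).aemeasurable (h01 i) t
    _ = exp ((exp t - 1) * ∫ ω, ∑ i ∈ s, X i ω ∂μ) := by
        rw [← exp_sum, ← Finset.mul_sum, integral_finsetSum s fun i _ =>
          Integrable.of_mem_Icc 0 1 (hmeas i).aemeasurable (h01 i)]

lemma iIndepFun.measure_sum_le_le_exp_of_mem_unitInterval (hind : iIndepFun X μ)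
    (hmeas : ∀ i, Measurable (X i)) (h01 : ∀ i, ∀ᵐ ω ∂μ, X i ω ∈ Set.Icc (0 : ℝ) 1)
    (s : Finset ι) {t : ℝ} (ht : t ≤ 0) (a : ℝ) :
    μ.real {ω | ∑ i ∈ s, X i ω ≤ a} ≤
      exp (-t * a + (exp t - 1) * ∫ ω, ∑ i ∈ s, X i ω ∂μ) := by
  have hsum_nonneg : ∀ᵐ ω ∂μ, 0 ≤ ∑ i ∈ s, X i ω := by
    filter_upwards [(Filter.eventually_all_finset s).2 fun i _ => h01 i] with ω hω
    exact Finset.sum_nonneg fun i hi => (hω i hi).1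
  have hint : Integrable (fun ω => exp (t * ∑ i ∈ s, X i ω)) μ :=
    Integrable.of_mem_Icc 0 1 (by fun_prop) <| hsum_nonneg.mono fun _ h =>
      ⟨(exp_pos _).le, exp_le_one_iff.2 (mul_nonpos_of_nonpos_of_nonneg ht h)⟩
  calc μ.real {ω | ∑ i ∈ s, X i ω ≤ a}
      ≤ exp (-t * a) * mgf (fun ω => ∑ i ∈ s, X i ω) μ t :=
        measure_le_le_exp_mul_mgf a ht hint
    _ ≤ exp (-t * a) * exp ((exp t - 1) * ∫ ω, ∑ i ∈ s, X i ω ∂μ) := by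
        gcongr
        exact hind.mgf_sum_le_exp_of_mem_unitInterval hmeas h01 s t
    _ = exp (-t * a + (exp t - 1) * ∫ ω, ∑ i ∈ s, X i ω ∂μ) := (exp_add _ _).symm

end ProbabilityTheory

theorem chernoff_lower_tail_bernoulli_general
    {Ω : Type*} [MeasurableSpace Ω] (μ : Measure Ω) [IsProbabilityMeasure μ]
    (k : ℕ) (X : Fin k → Ω → ℝ)
    (hmeas : ∀ i, Measurable (X i))
    (hind : iIndepFun X μ)
    (hval : ∀ i, ∀ ω, X i ω = 0 ∨ X i ω = 1)
    (c : ℝ) (d : ℕ) (hc : 4 ≤ c)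
    (hmean : c * d ≤ ∫ ω, (∑ i, X i ω) ∂μ) :
    ∀ j : ℕ, j ≤ d →
      (μ {ω | ∑ i, X i ω ≤ (d : ℝ) - j}).toReal ≤
        Real.exp (-(c / 4) * d - (3 / 4) * j) := by
  intro j _
  have h01 i : ∀ᵐ ω ∂μ, X i ω ∈ Set.Icc (0 : ℝ) 1 := .of_forall fun ω => by
    rcases hval i ω with h | h <;> simp [h]
  refine (hind.measure_sum_le_le_exp_of_mem_unitInterval hmeas h01 Finset.univ
    neg_one_lt_zero.le _).trans (exp_le_exp.2 ?_)
  have hcd : 4 * (d : ℝ) ≤ c * d := mul_le_mul_of_nonneg_right hc d.cast_nonneg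
  have hexp : (exp (-1) - 1) * ∫ ω, (∑ i, X i ω) ∂μ ≤ -(1 / 2) * ∫ ω, (∑ i, X i ω) ∂μ :=
    mul_le_mul_of_nonneg_right (by linarith [exp_neg_one_lt_half])
      (by linarith [d.cast_nonneg (α := ℝ)])
  linarith [j.cast_nonneg (α := ℝ)]

/-- Chernoff lower-tail bound for a sum `Y` of independent Bernoulli
random variables with mean `μ = E[Y] ≥ c·d`, `c ≥ 4`: for `0 ≤ j ≤ d`,
`P(Y ≤ d − j) ≤ exp(−(c/4)d − (3/4)j)`. -/
theorem chernoff_lower_tail_bernoulli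
    {Ω : Type*} [MeasurableSpace Ω] (μ : Measure Ω) [IsProbabilityMeasure μ]
    (k : ℕ) (X : Fin k → Ω → ℝ) (p : Fin k → ℝ)
    (hmeas : ∀ i, Measurable (X i))
    (hind : iIndepFun X μ)
    (hval : ∀ i, ∀ ω, X i ω = 0 ∨ X i ω = 1)
    (hp : ∀ i, μ {ω | X i ω = 1} = ENNReal.ofReal (p i))
    (c : ℝ) (d : ℕ) (hc : 4 ≤ c) (hd : 1 ≤ d)
    (hmean : c * d ≤ ∫ ω, (∑ i, X i ω) ∂μ) :
    ∀ j : ℕ, j ≤ d →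
      (μ {ω | ∑ i, X i ω ≤ (d : ℝ) - j}).toReal ≤
        Real.exp (-(c / 4) * d - (3 / 4) * j) :=
  chernoff_lower_tail_bernoulli_general μ k X hmeas hind hval c d hc hmean
end

section
/- Let Y be a sum of independent Bernoulli random variables with E[Y] ≥ c·d, where c ≥ 4 and d ≥ 1 is an integer. Define the residual Z = max(d − Y, 0). Then E[Z] ≤ exp(−(c/4)·d). -/
/-!
Since `Y = ∑ Xᵢ` is `ℕ`-valued, `E[max (d - Y) 0] = ∑_{j=1}^d P(Y ≤ d - j)`. The Chernoff bound
at `t = -3/4`, with `E[exp (t Y)] ≤ exp ((eᵗ - 1) E[Y])` and `e^{-3/4} ≤ 1/2`, gives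
`P(Y ≤ d - j) ≤ exp (-(c/4) d) e^{-3j/4}`, and `∑_{j ≥ 1} e^{-3j/4} ≤ 1`.
-/

open MeasureTheory ProbabilityTheory

open Finset Real

lemma max_natCast_sub_zero_eq_sum_ite (n d : ℕ) :
    max ((d : ℝ) - n) 0 = ∑ j ∈ Icc 1 d, if (n : ℝ) ≤ d - j then 1 else 0 := by
  have hfilter : (Icc 1 d).filter (fun j : ℕ => (n : ℝ) ≤ d - j) = Icc 1 (d - n) := by
    ext j
    simp only [mem_filter, mem_Icc, le_sub_iff_add_le]
    norm_cast
    omega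
  rw [sum_boole, hfilter, Nat.card_Icc, Nat.add_sub_cancel]
  rcases le_total n d with h | h
  · rw [Nat.cast_sub h, max_eq_left (by simpa using h)]
  · rw [Nat.sub_eq_zero_of_le h, max_eq_right (by simpa using h), Nat.cast_zero]

lemma sum_eq_card_filter_of_zero_or_one {ι : Type*} (s : Finset ι) {x : ι → ℝ}
    (hx : ∀ i, x i = 0 ∨ x i = 1) : ∑ i ∈ s, x i = #{i ∈ s | x i = 1} := by
  rw [← sum_boole]
  refine sum_congr rfl fun i _ => ?_
  rcases hx i with h | h <;> simp [h]

lemma sum_Icc_pow_le_one {r : ℝ} (hr₀ : 0 ≤ r) (hr : r ≤ 1 / 2) (d : ℕ) :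
    ∑ j ∈ Icc 1 d, r ^ j ≤ 1 := by
  rw [← Ico_add_one_right_eq_Icc]
  refine (geom_sum_Ico_le_of_lt_one hr₀ (by linarith)).trans ?_
  rw [pow_one, div_le_one (by linarith)]
  linarith

lemma exp_neg_three_quarters_le_half : exp (-(3 / 4)) ≤ 1 / 2 := by
  rw [one_div, ← exp_log (two_pos : (0 : ℝ) < 2), ← exp_neg, exp_le_exp, neg_le_neg_iff]
  linarith [log_two_lt_d9]

section TailSum

variable {Ω : Type*} [MeasurableSpace Ω] {μ : Measure Ω}

lemma integral_max_sub_zero_eq_sum_measureReal [IsFiniteMeasure μ] {Y : Ω → ℝ}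
    (hY : Measurable Y) (hY_nat : ∀ ω, ∃ n : ℕ, Y ω = n) (d : ℕ) :
    ∫ ω, max ((d : ℝ) - Y ω) 0 ∂μ = ∑ j ∈ Icc 1 d, μ.real {ω | Y ω ≤ d - j} := by
  have hmeas (j : ℕ) : MeasurableSet {ω | Y ω ≤ d - j} := measurableSet_le hY measurable_const
  have hpt : (fun ω => max ((d : ℝ) - Y ω) 0) =
      fun ω => ∑ j ∈ Icc 1 d, {ω | Y ω ≤ d - j}.indicator 1 ω := by
    funext ω
    obtain ⟨n, hn⟩ := hY_nat ω
    simp only [Set.indicator_apply, Set.mem_ofPred_eq, Pi.one_apply, hn]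
    exact max_natCast_sub_zero_eq_sum_ite n d
  rw [hpt, integral_finsetSum _ fun j _ => (integrable_const 1).indicator (hmeas j)]
  exact sum_congr rfl fun j _ => integral_indicator_one (hmeas j)

end TailSum

section Bernoulli

variable {Ω : Type*} [MeasurableSpace Ω] {μ : Measure Ω} [IsProbabilityMeasure μ]

lemma integrable_of_zero_or_one {X : Ω → ℝ} (hX : Measurable X)
    (hval : ∀ ω, X ω = 0 ∨ X ω = 1) : Integrable X μ :=
  .of_bound hX.aestronglyMeasurable 1 <| .of_forall fun ω => by
    rcases hval ω with h | h <;> simp [h]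

lemma mgf_eq_of_zero_or_one {X : Ω → ℝ} (hX : Measurable X)
    (hval : ∀ ω, X ω = 0 ∨ X ω = 1) (t : ℝ) :
    mgf X μ t = 1 + (exp t - 1) * ∫ ω, X ω ∂μ := by
  have hpt : (fun ω => exp (t * X ω)) = fun ω => 1 + (exp t - 1) * X ω := by
    funext ω
    rcases hval ω with h | h <;> simp [h]
  rw [mgf, hpt, integral_add (integrable_const 1)
    ((integrable_of_zero_or_one hX hval).const_mul _), integral_const_mul]
  simp

variable {ι : Type*} [Fintype ι] {X : ι → Ω → ℝ}

lemma mgf_sum_le_exp_of_zero_or_one (hmeas : ∀ i, Measurable (X i)) (hind : iIndepFun X μ)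
    (hval : ∀ i ω, X i ω = 0 ∨ X i ω = 1) (t : ℝ) :
    mgf (fun ω => ∑ i, X i ω) μ t ≤ exp ((exp t - 1) * ∫ ω, ∑ i, X i ω ∂μ) := by
  have hsum : (fun ω => ∑ i, X i ω) = ∑ i, X i := by
    funext ω
    simp only [Finset.sum_apply]
  rw [hsum, hind.mgf_sum hmeas, ← hsum,
    integral_finsetSum _ fun i _ => integrable_of_zero_or_one (hmeas i) (hval i), mul_sum,
    exp_sum]
  refine prod_le_prod (fun i _ => mgf_nonneg) fun i _ => ?_
  rw [mgf_eq_of_zero_or_one (hmeas i) (hval i), add_comm]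
  exact add_one_le_exp _

lemma measureReal_sum_le_le_of_zero_or_one (hmeas : ∀ i, Measurable (X i))
    (hind : iIndepFun X μ) (hval : ∀ i ω, X i ω = 0 ∨ X i ω = 1) {t : ℝ} (ht : t ≤ 0)
    (x : ℝ) :
    μ.real {ω | ∑ i, X i ω ≤ x} ≤ exp (-t * x + (exp t - 1) * ∫ ω, ∑ i, X i ω ∂μ) := by
  have hsum_nonneg (ω : Ω) : 0 ≤ ∑ i, X i ω :=
    sum_nonneg fun i _ => by rcases hval i ω with h | h <;> simp [h]
  have hint : Integrable (fun ω => exp (t * ∑ i, X i ω)) μ := by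
    refine .of_bound (by fun_prop) 1 (.of_forall fun ω => ?_)
    rw [norm_of_nonneg (exp_pos _).le, exp_le_one_iff]
    exact mul_nonpos_of_nonpos_of_nonneg ht (hsum_nonneg ω)
  calc μ.real {ω | ∑ i, X i ω ≤ x}
      ≤ exp (-t * x) * mgf (fun ω => ∑ i, X i ω) μ t := measure_le_le_exp_mul_mgf x ht hint
    _ ≤ exp (-t * x) * exp ((exp t - 1) * ∫ ω, ∑ i, X i ω ∂μ) := by
        gcongr
        exact mgf_sum_le_exp_of_zero_or_one hmeas hind hval t
    _ = _ := (exp_add _ _).symm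

end Bernoulli

theorem expected_residual_le_general
    {Ω : Type*} [MeasurableSpace Ω] (μ : Measure Ω) [IsProbabilityMeasure μ]
    (k : ℕ) (X : Fin k → Ω → ℝ)
    (hmeas : ∀ i, Measurable (X i))
    (hind : iIndepFun X μ)
    (hval : ∀ i, ∀ ω, X i ω = 0 ∨ X i ω = 1)
    (c : ℝ) (d : ℕ) (hc : 4 ≤ c)
    (hmean : c * d ≤ ∫ ω, (∑ i, X i ω) ∂μ) :
    ∫ ω, max ((d : ℝ) - ∑ i, X i ω) 0 ∂μ ≤ Real.exp (-(c / 4) * d) := by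
  have hY_nat (ω : Ω) : ∃ n : ℕ, ∑ i, X i ω = n :=
    ⟨_, sum_eq_card_filter_of_zero_or_one _ fun i => hval i ω⟩
  rw [integral_max_sub_zero_eq_sum_measureReal (by fun_prop) hY_nat]
  calc ∑ j ∈ Icc 1 d, μ.real {ω | ∑ i, X i ω ≤ d - j}
      ≤ ∑ j ∈ Icc 1 d, exp (-(c / 4) * d) * exp (-(3 / 4)) ^ j := by
        gcongr with j
        refine (measureReal_sum_le_le_of_zero_or_one hmeas hind hval
          (by norm_num : -(3 / 4 : ℝ) ≤ 0) _).trans ?_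
        rw [← exp_nat_mul, ← exp_add, exp_le_exp]
        have hm : 0 ≤ ∫ ω, ∑ i, X i ω ∂μ := le_trans (by positivity) hmean
        have hdecay : (exp (-(3 / 4)) - 1) * ∫ ω, ∑ i, X i ω ∂μ ≤ -(1 / 2) * (c * d) := by
          nlinarith [exp_neg_three_quarters_le_half]
        have hcd : 4 * (d : ℝ) ≤ c * d := by gcongr
        linarith
    _ = exp (-(c / 4) * d) * ∑ j ∈ Icc 1 d, exp (-(3 / 4)) ^ j := (mul_sum ..).symm
    _ ≤ exp (-(c / 4) * d) := mul_le_of_le_one_right (exp_pos _).le <|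
        sum_Icc_pow_le_one (exp_pos _).le exp_neg_three_quarters_le_half d

/-- If `Y` is a sum of independent Bernoulli random variables with
`E[Y] ≥ c·d`, `c ≥ 4`, `d ≥ 1`, then the residual `Z = max(d − Y, 0)` satisfies
`E[Z] ≤ exp(−(c/4)·d)`. -/
theorem expected_residual_le
    {Ω : Type*} [MeasurableSpace Ω] (μ : Measure Ω) [IsProbabilityMeasure μ]
    (k : ℕ) (X : Fin k → Ω → ℝ) (p : Fin k → ℝ)
    (hmeas : ∀ i, Measurable (X i))
    (hind : iIndepFun X μ)
    (hval : ∀ i, ∀ ω, X i ω = 0 ∨ X i ω = 1)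
    (hp : ∀ i, μ {ω | X i ω = 1} = ENNReal.ofReal (p i))
    (c : ℝ) (d : ℕ) (hc : 4 ≤ c) (hd : 1 ≤ d)
    (hmean : c * d ≤ ∫ ω, (∑ i, X i ω) ∂μ) :
    ∫ ω, max ((d : ℝ) - ∑ i, X i ω) 0 ∂μ ≤ Real.exp (-(c / 4) * d) :=
  expected_residual_le_general μ k X hmeas hind hval c d hc hmean
end

section
/- Let F = {r_1,…,r_m} be sets over a finite ground set P with demands d : P → ℕ, and let x ∈ [0,1]^m be a feasible fractional multi-cover (i.e., ∑_{i : p ∈ r_i} x_i ≥ d(p) for all p). In the derived set system (P', F̂), where P' consists of pairs (p, I) for the greedy interval decomposition of each point's constraint and F̂ = {r̂_i} with r̂_i = {(p,I) ∈ P' : p ∈ r_i and i ∈ I}, the vector 2x is a feasible fractional set cover of value at most 2·∑_i x_i: every element (p, I) of P' is fractionally covered to total weight at least 1 by {r̂_i}. -/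
/-! The block `V` lies inside its own hull `[min V, max V]` and consists of ranges containing `p`,
so the derived ranges containing `(p, I)` include all of `V`, which alone carries weight
`2 · ∑_{i ∈ V} x_i ≥ 1`. -/

theorem Finset.subset_Icc_min'_max' {ι : Type*} [LinearOrder ι] [LocallyFiniteOrder ι]
    (s : Finset ι) (hs : s.Nonempty) : s ⊆ Finset.Icc (s.min' hs) (s.max' hs) :=
  fun _ hi => Finset.mem_Icc.2 ⟨s.min'_le _ hi, s.le_max' _ hi⟩

/-- In the derived set system of the greedy interval decomposition, the
vector `2x` is a feasible fractional set cover of value `2·∑ x_i`: for any point `p` and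
any greedy block `V` of indices of ranges containing `p` with `∑_{i ∈ V} x_i ≥ 1/2`, the
element `(p, I)` with `I = [min V, max V]` is fractionally covered to weight at least `1`
by the weights `2x_i` on the derived ranges `r̂_i` (i.e. over indices `i ∈ I` with
`p ∈ r_i`), and the total value of `2x` is `2·∑ x_i`. -/
theorem derived_system_fractional_cover {α : Type*} [DecidableEq α]
    (m : ℕ) (r : Fin m → Finset α) (x : Fin m → ℝ) (p : α)
    (hx : ∀ i, 0 ≤ x i ∧ x i ≤ 1)
    (V : Finset (Fin m)) (hV : V.Nonempty)
    (hVr : ∀ i ∈ V, p ∈ r i)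
    (hVsum : 1 / 2 ≤ ∑ i ∈ V, x i) :
    1 ≤ (∑ i ∈ Finset.univ.filter
          (fun i => p ∈ r i ∧ i ∈ Finset.Icc (V.min' hV) (V.max' hV)), 2 * x i) ∧
    (∑ i, 2 * x i) = 2 * ∑ i, x i := by
  refine ⟨?_, (Finset.mul_sum _ _ _).symm⟩
  have hV_sub : V ⊆ Finset.univ.filter
      (fun i => p ∈ r i ∧ i ∈ Finset.Icc (V.min' hV) (V.max' hV)) := fun i hi =>
    Finset.mem_filter.2 ⟨Finset.mem_univ i, hVr i hi, V.subset_Icc_min'_max' hV hi⟩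
  calc (1 : ℝ) ≤ 2 * ∑ i ∈ V, x i := by linarith
    _ = ∑ i ∈ V, 2 * x i := Finset.mul_sum _ _ _
    _ ≤ _ := Finset.sum_le_sum_of_subset_of_nonneg hV_sub fun i _ _ => by linarith [(hx i).1]
end

section
/- With the derived set system (P', F̂) as above, any sub-collection Ĉ ⊆ F̂ that covers every element of P' (set cover) corresponds to a sub-collection C ⊆ F of the same cardinality that is a feasible multi-cover for the original instance: every point p is contained in at least d(p) distinct sets of C, provided the greedy decomposition of p produced at least d(p) blocks. -/
open Finset

/-- Disjointness forces distinct members of the family to meet `t` in distinct points. -/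
theorem Finset.card_le_card_of_pairwiseDisjoint_of_forall_exists_mem {ι κ : Type*}
    {s : Finset ι} {f : ι → Finset κ} {t : Finset κ}
    (hf : (s : Set ι).PairwiseDisjoint f) (hmeet : ∀ a ∈ s, ∃ i ∈ t, i ∈ f a) : #s ≤ #t :=
  card_le_card_of_forall_subsingleton (fun a i => i ∈ f a) hmeet fun i _ _ ha _ hb =>
    hf.elim ha.1 hb.1 (not_disjoint_iff.2 ⟨i, ha.2, hb.2⟩)

/-- A set cover of the derived system yields a multi-cover of the same
cardinality for the original instance. Here `P'` is the derived ground set of pairs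
`(p, I)` of a point together with a block (interval of indices, represented as a set of
indices); the blocks attached to a fixed point are pairwise disjoint, and each point
`p ∈ P` has at least `d p` blocks. If the index set `C` covers the derived system (for
each `(p, I) ∈ P'` some `i ∈ C` has `p ∈ r i` and `i ∈ I`), then every `p ∈ P` lies in
at least `d p` distinct ranges indexed by `C`. -/
theorem derived_cover_to_multicover {α : Type*} [DecidableEq α]
    (m : ℕ) (r : Fin m → Finset α) (d : α → ℕ) (P : Finset α)
    (P' : Finset (α × Finset (Fin m))) (C : Finset (Fin m))
    (hdisj : ∀ p ∈ P, ∀ I J : Finset (Fin m),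
      (p, I) ∈ P' → (p, J) ∈ P' → I ≠ J → Disjoint I J)
    (hblocks : ∀ p ∈ P, d p ≤ (P'.filter (fun q => q.1 = p)).card)
    (hcover : ∀ q ∈ P', ∃ i ∈ C, q.1 ∈ r i ∧ i ∈ q.2) :
    ∀ p ∈ P, d p ≤ (C.filter (fun i => p ∈ r i)).card := by
  intro p hp
  refine (hblocks p hp).trans (card_le_card_of_pairwiseDisjoint_of_forall_exists_mem
    (f := Prod.snd) ?_ ?_)
  · rintro ⟨p₁, I⟩ hI ⟨p₂, J⟩ hJ hne
    obtain ⟨hIP', hp₁ : p₁ = p⟩ := mem_filter.1 hI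
    obtain ⟨hJP', hp₂ : p₂ = p⟩ := mem_filter.1 hJ
    exact hdisj p hp I J (hp₁ ▸ hIP') (hp₂ ▸ hJP') fun hIJ => hne (by rw [hp₁, hp₂, hIJ])
  · rintro ⟨p₁, I⟩ hI
    obtain ⟨hIP', rfl⟩ := mem_filter.1 hI
    obtain ⟨i, hiC, hir, hiI⟩ := hcover _ hIP'
    exact ⟨i, mem_filter.2 ⟨hiC, hir⟩, hiI⟩
end
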